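/- Let A₁, A₂, A₃ be three pairwise distinct points of ℝ³. The interior angle sum ω(A₁;A₂,A₃) + ω(A₂;A₁,A₃) + ω(A₃;A₁,A₂) of the Nil translation triangle equals π if and only if the six unit vectors t(Aᵢ,Aⱼ)/‖t(Aᵢ,Aⱼ)‖ (for all ordered pairs i≠j) lie in one common Euclidean plane of ℝ³; since t(P,Q) = −t(Q,P), this is equivalent to the three vectors t(A₁,A₂), t(A₁,A₃), t(A₂,A₃) being linearly dependent (spanning a linear subspace of dimension at most 2). -/

import Mathlib

noncomputable section

open Real

/-- The Nil translation tangent vector `t(P,Q)`. -/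
def nilT (P Q : ℝ × ℝ × ℝ) : ℝ × ℝ × ℝ :=
  (Q.1 - P.1, Q.2.1 - P.2.1,
   Q.2.2 - P.2.2 + P.1 * (P.2.1 - Q.2.1) - (Q.1 - P.1) * (Q.2.1 - P.2.1) / 2)

/-- Euclidean dot product on ℝ³. -/
def dot3 (u v : ℝ × ℝ × ℝ) : ℝ := u.1 * v.1 + u.2.1 * v.2.1 + u.2.2 * v.2.2

/-- Euclidean norm on ℝ³. -/
def norm3 (u : ℝ × ℝ × ℝ) : ℝ := Real.sqrt (dot3 u u)

/-- The interior angle of a Nil translation triangle at the vertex `P`. -/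
def nilAngle (P Q R : ℝ × ℝ × ℝ) : ℝ :=
  Real.arccos (dot3 (nilT P Q) (nilT P R) / (norm3 (nilT P Q) * norm3 (nilT P R)))

open InnerProductGeometry
open scoped RealInnerProductSpace

section Aux

lemma nil_core_reverse {E : Type*} [NormedAddCommGroup E] [InnerProductSpace ℝ E]
    {u v : E} (hv : v ≠ 0) (huv : u + v ≠ 0) :
    angle u (u + v) + angle (u + v) v = angle u v := by
  have h := angle_add_angle_sub_add_angle_sub_eq_pi (u + v) hv
  have h1 : (u + v) - v = u := by abel
  have h2 : v - (u + v) = -u := by abel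
  rw [h1, h2, angle_neg_right] at h
  have c1 := angle_comm u v
  have c2 := angle_comm u (u + v)
  have c3 := angle_comm v u
  linarith

lemma nil_core_forward {E : Type*} [NormedAddCommGroup E] [InnerProductSpace ℝ E]
    {u v w : E} (hu : u ≠ 0) (hv : v ≠ 0) (hw : w ≠ 0)
    (h : angle u w + angle w v = angle u v) :
    ∃ c₀ c₁ c₂ : ℝ, (c₀ ≠ 0 ∨ c₁ ≠ 0 ∨ c₂ ≠ 0) ∧ c₀ • u + c₁ • w + c₂ • v = 0 := by
  have hun : (0:ℝ) < ‖u‖ := norm_pos_iff.2 hu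
  have hvn : (0:ℝ) < ‖v‖ := norm_pos_iff.2 hv
  have hwn : (0:ℝ) < ‖w‖ := norm_pos_iff.2 hw
  set a : E := ‖u‖⁻¹ • u with ha_def
  set b : E := ‖w‖⁻¹ • w with hb_def
  set c : E := ‖v‖⁻¹ • v with hc_def
  have hna : ‖a‖ = 1 := norm_smul_inv_norm hu
  have hnb : ‖b‖ = 1 := norm_smul_inv_norm hw
  have hnc : ‖c‖ = 1 := norm_smul_inv_norm hv
  set p : ℝ := ⟪a, b⟫ with hp_def
  set q : ℝ := ⟪b, c⟫ with hq_def
  set r : ℝ := ⟪a, c⟫ with hr_def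
  have hp1 : |p| ≤ 1 := by
    have := abs_real_inner_le_norm a b; rwa [hna, hnb, one_mul] at this
  have hq1 : |q| ≤ 1 := by
    have := abs_real_inner_le_norm b c; rwa [hnb, hnc, one_mul] at this
  have hr1 : |r| ≤ 1 := by
    have := abs_real_inner_le_norm a c; rwa [hna, hnc, one_mul] at this
  have hab : angle u w = Real.arccos p := by
    rw [show angle u w = angle a b by
      rw [ha_def, hb_def, angle_smul_left_of_pos _ _ (inv_pos.2 hun),
        angle_smul_right_of_pos _ _ (inv_pos.2 hwn)]]
    simp [angle, hna, hnb]; rfl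
  have hbc : angle w v = Real.arccos q := by
    rw [show angle w v = angle b c by
      rw [hb_def, hc_def, angle_smul_left_of_pos _ _ (inv_pos.2 hwn),
        angle_smul_right_of_pos _ _ (inv_pos.2 hvn)]]
    simp [angle, hnb, hnc]; rfl
  have hac : angle u v = Real.arccos r := by
    rw [show angle u v = angle a c by
      rw [ha_def, hc_def, angle_smul_left_of_pos _ _ (inv_pos.2 hun),
        angle_smul_right_of_pos _ _ (inv_pos.2 hvn)]]
    simp [angle, hna, hnc]; rfl
  rw [hab, hbc, hac] at h
  have hcos : r = p * q - Real.sqrt (1 - p ^ 2) * Real.sqrt (1 - q ^ 2) := by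
    have := congrArg Real.cos h
    rw [Real.cos_add, Real.cos_arccos (neg_le_of_abs_le hp1) (le_of_abs_le hp1),
      Real.cos_arccos (neg_le_of_abs_le hq1) (le_of_abs_le hq1),
      Real.cos_arccos (neg_le_of_abs_le hr1) (le_of_abs_le hr1),
      Real.sin_arccos, Real.sin_arccos] at this
    linarith
  set a' : E := a - p • b with ha'_def
  set s : E := c - q • b with hs_def
  have hbb : ⟪b, b⟫ = 1 := by
    rw [real_inner_self_eq_norm_mul_norm, hnb]; norm_num
  have hba : ⟪b, a⟫ = p := by rw [real_inner_comm]
  have hcb : ⟪c, b⟫ = q := by rw [real_inner_comm]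
  have hinner : ⟪a', s⟫ = r - p * q := by
    simp [ha'_def, hs_def, inner_sub_left, inner_sub_right, real_inner_smul_left,
      real_inner_smul_right, hbb, hba, hcb, hnb, ← hp_def, ← hq_def, ← hr_def]
  have hna' : ‖a'‖ = Real.sqrt (1 - p ^ 2) := by
    have h1 : ⟪a', a'⟫ = 1 - p ^ 2 := by
      simp only [ha'_def, inner_sub_left, inner_sub_right, real_inner_smul_left,
        real_inner_smul_right, hbb, hba, ← hp_def, real_inner_self_eq_norm_mul_norm, hna]
      rw [norm_smul, hnb, Real.norm_eq_abs]
      simp only [mul_one, abs_mul_abs_self]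
      ring
    rw [← h1, real_inner_self_eq_norm_mul_norm, Real.sqrt_mul_self (norm_nonneg _)]
  have hns : ‖s‖ = Real.sqrt (1 - q ^ 2) := by
    have h1 : ⟪s, s⟫ = 1 - q ^ 2 := by
      simp only [hs_def, inner_sub_left, inner_sub_right, real_inner_smul_left,
        real_inner_smul_right, hbb, hcb, ← hq_def, real_inner_self_eq_norm_mul_norm, hnc]
      rw [norm_smul, hnb, Real.norm_eq_abs]
      simp only [mul_one, abs_mul_abs_self]
      ring
    rw [← h1, real_inner_self_eq_norm_mul_norm, Real.sqrt_mul_self (norm_nonneg _)]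
  by_cases ha0 : a' = 0
  · refine ⟨‖u‖⁻¹, -(p * ‖w‖⁻¹), 0, Or.inl (by positivity), ?_⟩
    have : a - p • b = 0 := by rw [← ha'_def]; exact ha0
    rw [ha_def, hb_def] at this
    linear_combination (norm := module) this
  by_cases hs0 : s = 0
  · refine ⟨0, -(q * ‖w‖⁻¹), ‖v‖⁻¹, Or.inr (Or.inr (by positivity)), ?_⟩
    have : c - q • b = 0 := by rw [← hs_def]; exact hs0
    rw [hc_def, hb_def] at this
    linear_combination (norm := module) this
  · have key : ⟪-a', s⟫ = ‖-a'‖ * ‖s‖ := by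
      rw [inner_neg_left, norm_neg, hinner, hna', hns, hcos]; ring
    have h3 := inner_eq_norm_mul_iff_real.mp key
    rw [norm_neg] at h3
    have hrel : (‖s‖ * ‖u‖⁻¹) • u + ((-(‖s‖ * p) - ‖a'‖ * q) * ‖w‖⁻¹) • w
        + (‖a'‖ * ‖v‖⁻¹) • v = 0 := by
      have e : ‖s‖ • (‖u‖⁻¹ • u - p • (‖w‖⁻¹ • w)) + ‖a'‖ • (‖v‖⁻¹ • v - q • (‖w‖⁻¹ • w)) = 0 := by
        have e2 : ‖s‖ • a' + ‖a'‖ • s = 0 := by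
          linear_combination (norm := module) -h3
        rw [ha'_def, hs_def, ha_def, hb_def, hc_def] at e2
        linear_combination (norm := module) e2
      linear_combination (norm := module) e
    exact ⟨_, _, _, Or.inl (by
      have : ‖s‖ ≠ 0 := fun h0 => hs0 (norm_eq_zero.mp h0)
      positivity), hrel⟩

/-- Embedding of `ℝ × ℝ × ℝ` into `EuclideanSpace ℝ (Fin 3)`. -/
def toE3 : (ℝ × ℝ × ℝ) →ₗ[ℝ] EuclideanSpace ℝ (Fin 3) where
  toFun u := WithLp.toLp 2 ![u.1, u.2.1, u.2.2]
  map_add' u v := by ext i; fin_cases i <;> simp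
  map_smul' c u := by ext i; fin_cases i <;> simp

lemma inner_toE3 (u v : ℝ × ℝ × ℝ) :
    (inner ℝ (toE3 u) (toE3 v) : ℝ) = u.1 * v.1 + u.2.1 * v.2.1 + u.2.2 * v.2.2 := by
  simp [toE3, PiLp.inner_apply, Fin.sum_univ_three, RCLike.inner_apply]; ring

lemma norm_toE3 (u : ℝ × ℝ × ℝ) : ‖toE3 u‖ = norm3 u := by
  rw [show norm3 u = Real.sqrt (inner ℝ (toE3 u) (toE3 u) : ℝ) by rw [inner_toE3]; rfl,
    real_inner_self_eq_norm_mul_norm, Real.sqrt_mul_self (norm_nonneg _)]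

lemma toE3_inj : Function.Injective toE3 := by
  intro x y h
  have h0 := congrFun (congrArg WithLp.ofLp h) 0
  have h1 := congrFun (congrArg WithLp.ofLp h) 1
  have h2 := congrFun (congrArg WithLp.ofLp h) 2
  simp [toE3] at h0 h1 h2
  exact Prod.ext h0 (Prod.ext h1 h2)

lemma toE3_ne_zero {u : ℝ × ℝ × ℝ} (hu : u ≠ 0) : toE3 u ≠ 0 := by
  intro h0
  exact hu (toE3_inj (h0.trans (map_zero toE3).symm))

lemma nilAngle_eq (P Q R : ℝ × ℝ × ℝ) :
    nilAngle P Q R = angle (toE3 (nilT P Q)) (toE3 (nilT P R)) := by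
  rw [nilAngle, angle, inner_toE3, norm_toE3, norm_toE3]; rfl

lemma nilT_neg (P Q : ℝ × ℝ × ℝ) : nilT Q P = - nilT P Q := by
  simp only [nilT, Prod.neg_mk, Prod.mk.injEq]
  refine ⟨by ring, by ring, by ring⟩

lemma nilT_ne_zero {P Q : ℝ × ℝ × ℝ} (h : P ≠ Q) : nilT P Q ≠ 0 := by
  intro h0
  apply h
  simp only [nilT, Prod.ext_iff, Prod.fst_zero, Prod.snd_zero] at h0
  obtain ⟨h1, h2, h3⟩ := h0
  refine Prod.ext (by linarith) (Prod.ext (by linarith) ?_)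
  linear_combination -h3 - P.1 * h2 - ((Q.2.1 - P.2.1) / 2) * h1

lemma nilT_add (P Q R : ℝ × ℝ × ℝ) :
    nilT P R = nilT P Q + nilT Q R +
      ((0:ℝ), (0:ℝ),
        ((nilT P Q).1 * (nilT Q R).2.1 - (nilT P Q).2.1 * (nilT Q R).1) / 2) := by
  simp only [nilT, Prod.mk_add_mk, Prod.mk.injEq]
  refine ⟨by ring, by ring, by ring⟩

end Aux

/-- The interior angle sum of a Nil translation triangle equals π if and only if
the six (unit) tangent vectors lie in a common Euclidean plane; since `t(P,Q) = -t(Q,P)`,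
this amounts to the three vectors `t(A₁,A₂)`, `t(A₁,A₃)`, `t(A₂,A₃)` being
linearly dependent. -/
theorem nil_translation_triangle_angle_sum_eq_pi_iff
    (A₁ A₂ A₃ : ℝ × ℝ × ℝ) (h12 : A₁ ≠ A₂) (h13 : A₁ ≠ A₃) (h23 : A₂ ≠ A₃) :
    nilAngle A₁ A₂ A₃ + nilAngle A₂ A₁ A₃ + nilAngle A₃ A₁ A₂ = π ↔
      ¬ LinearIndependent ℝ ![nilT A₁ A₂, nilT A₁ A₃, nilT A₂ A₃] := by
  set u := nilT A₁ A₂ with hu_def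
  set w := nilT A₁ A₃ with hw_def
  set v := nilT A₂ A₃ with hv_def
  have hu : u ≠ 0 := nilT_ne_zero h12
  have hw : w ≠ 0 := nilT_ne_zero h13
  have hv : v ≠ 0 := nilT_ne_zero h23
  have hU : toE3 u ≠ 0 := toE3_ne_zero hu
  have hW : toE3 w ≠ 0 := toE3_ne_zero hw
  have hV : toE3 v ≠ 0 := toE3_ne_zero hv
  have e1 : nilAngle A₁ A₂ A₃ = angle (toE3 u) (toE3 w) := nilAngle_eq _ _ _
  have e2 : nilAngle A₂ A₁ A₃ = π - angle (toE3 u) (toE3 v) := by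
    rw [nilAngle_eq, show nilT A₂ A₁ = -u from nilT_neg _ _, map_neg, angle_neg_left]
  have e3 : nilAngle A₃ A₁ A₂ = angle (toE3 w) (toE3 v) := by
    rw [nilAngle_eq, show nilT A₃ A₁ = -w from nilT_neg _ _,
      show nilT A₃ A₂ = -v from nilT_neg _ _, map_neg, map_neg, angle_neg_neg]
  rw [e1, e2, e3]
  have key := nilT_add A₁ A₂ A₃
  rw [← hu_def, ← hv_def, ← hw_def] at key
  constructor
  · intro hsum
    have hang : angle (toE3 u) (toE3 w) + angle (toE3 w) (toE3 v)
        = angle (toE3 u) (toE3 v) := by linarith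
    obtain ⟨c₀, c₁, c₂, hc, hrel⟩ := nil_core_forward hU hV hW hang
    rw [Fintype.not_linearIndependent_iff]
    refine ⟨![c₀, c₁, c₂], ?_, ?_⟩
    · have h4 : toE3 (c₀ • u + c₁ • w + c₂ • v) = 0 := by
        rw [map_add, map_add, map_smul, map_smul, map_smul]; exact hrel
      have h0 : c₀ • u + c₁ • w + c₂ • v = 0 := toE3_inj (h4.trans (map_zero toE3).symm)
      rw [Fin.sum_univ_three]
      simpa using h0
    · rcases hc with h | h | h
      exacts [⟨0, by simpa⟩, ⟨1, by simpa⟩, ⟨2, by simpa⟩]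
  · intro hdep
    rw [Fintype.not_linearIndependent_iff] at hdep
    obtain ⟨g, hsum0, i, hgi⟩ := hdep
    rw [Fin.sum_univ_three] at hsum0
    simp only [Matrix.cons_val_zero, Matrix.cons_val_one, Matrix.head_cons,
      Matrix.cons_val_two, Matrix.tail_cons] at hsum0
    have E1 : g 0 * u.1 + g 1 * w.1 + g 2 * v.1 = 0 := by
      have := congrArg Prod.fst hsum0; simpa [smul_eq_mul] using this
    have E2 : g 0 * u.2.1 + g 1 * w.2.1 + g 2 * v.2.1 = 0 := by
      have := congrArg (fun x : ℝ × ℝ × ℝ => x.2.1) hsum0; simpa [smul_eq_mul] using this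
    have E3 : g 0 * u.2.2 + g 1 * w.2.2 + g 2 * v.2.2 = 0 := by
      have := congrArg (fun x : ℝ × ℝ × ℝ => x.2.2) hsum0; simpa [smul_eq_mul] using this
    have k1 : w.1 = u.1 + v.1 := by
      have := congrArg Prod.fst key; simpa using this
    have k2 : w.2.1 = u.2.1 + v.2.1 := by
      have := congrArg (fun x : ℝ × ℝ × ℝ => x.2.1) key; simpa using this
    have k3 : w.2.2 = u.2.2 + v.2.2 + (u.1 * v.2.1 - u.2.1 * v.1) / 2 := by
      have := congrArg (fun x : ℝ × ℝ × ℝ => x.2.2) key; simpa using this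
    have hA : (g 0 + g 1) * u.1 + (g 1 + g 2) * v.1 = 0 := by
      linear_combination E1 - g 1 * k1
    have hB : (g 0 + g 1) * u.2.1 + (g 1 + g 2) * v.2.1 = 0 := by
      linear_combination E2 - g 1 * k2
    have hAc : (g 0 + g 1) * (u.1 * v.2.1 - u.2.1 * v.1) = 0 := by
      linear_combination v.2.1 * hA - v.1 * hB
    have hBc : (g 1 + g 2) * (u.1 * v.2.1 - u.2.1 * v.1) = 0 := by
      linear_combination u.1 * hB - u.2.1 * hA
    have hcr : u.1 * v.2.1 - u.2.1 * v.1 = 0 := by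
      by_contra hcr
      have hA0 : g 0 + g 1 = 0 := by
        rcases mul_eq_zero.mp hAc with h | h
        · exact h
        · exact absurd h hcr
      have hB0 : g 1 + g 2 = 0 := by
        rcases mul_eq_zero.mp hBc with h | h
        · exact h
        · exact absurd h hcr
      have hg1 : g 1 * ((u.1 * v.2.1 - u.2.1 * v.1) / 2) = 0 := by
        linear_combination E3 - g 1 * k3 - u.2.2 * hA0 - v.2.2 * hB0
      have hg1' : g 1 = 0 := by
        rcases mul_eq_zero.mp hg1 with h | h
        · exact h
        · exact absurd (by linarith) hcr
      have hg0 : g 0 = 0 := by linarith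
      have hg2 : g 2 = 0 := by linarith
      fin_cases i <;> simp_all
    have hw_eq : w = u + v := by
      rw [key, hcr]
      norm_num
    have hW_eq : toE3 w = toE3 u + toE3 v := by rw [hw_eq, map_add]
    have hUV : toE3 u + toE3 v ≠ 0 := by rw [← hW_eq]; exact hW
    have := nil_core_reverse hV hUV
    rw [← hW_eq] at this
    linarith
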